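/- For any path P in G_{x,y} from v_{n,m} to v_{0,0}, the number of type-1 arcs in P equals (d(x,y)+n−m)/2, the number of type-2 arcs equals (−d(x,y)+n+m)/2, and the number of type-3 arcs equals (d(x,y)−n+m)/2. In particular, these counts are independent of the choice of path P. -/

import Mathlib

open Classical

variable {α : Type*}

/-- One single-symbol insertion or deletion step between sequences. -/
def EditStep (x y : List α) : Prop :=
  (∃ i a, y = x.insertIdx i a) ∨ (∃ i a, x = y.insertIdx i a)

/-- The indel distance: the minimum number of single-symbol insertions and
deletions transforming `x` into `y`. -/
noncomputable def indel (x y : List α) : ℕ :=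
  sInf {n | ∃ f : ℕ → List α, f 0 = x ∧ f n = y ∧ ∀ i < n, EditStep (f i) (f (i + 1))}

/-- The indel-distance table `h i j = d(x_[1..i], y_[1..j])`. -/
noncomputable def hh (x y : List α) (i j : ℕ) : ℕ :=
  indel (x.take i) (y.take j)

/-- Delete the (1-indexed) positions in the finite set `S` from `x`. -/
def delF (x : List α) (S : Finset ℕ) : List α :=
  (((List.range x.length).zip x).filter fun p => p.1 + 1 ∉ S).map Prod.snd

/-- Delete the (1-indexed) positions in the set `S` from `x`. -/
noncomputable def delS (x : List α) (S : Set ℕ) : List α :=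
  (((List.range x.length).zip x).filter fun p => decide (p.1 + 1 ∉ S)).map Prod.snd

/-- Type-1 arc `(v_{i,j}, v_{i-1,j})` when `h i j = h (i-1) j + 1`. -/
def IsArc1 (x y : List α) (p q : ℕ × ℕ) : Prop :=
  1 ≤ p.1 ∧ p.1 ≤ x.length ∧ p.2 ≤ y.length ∧ q = (p.1 - 1, p.2) ∧
    hh x y p.1 p.2 = hh x y (p.1 - 1) p.2 + 1

/-- Type-2 arc `(v_{i,j}, v_{i-1,j-1})` when `x_i = y_j`. -/
def IsArc2 (x y : List α) (p q : ℕ × ℕ) : Prop :=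
  1 ≤ p.1 ∧ p.1 ≤ x.length ∧ 1 ≤ p.2 ∧ p.2 ≤ y.length ∧ q = (p.1 - 1, p.2 - 1) ∧
    x[p.1 - 1]? = y[p.2 - 1]?

/-- Type-3 arc `(v_{i,j}, v_{i,j-1})` when `h i j = h i (j-1) + 1`. -/
def IsArc3 (x y : List α) (p q : ℕ × ℕ) : Prop :=
  p.1 ≤ x.length ∧ 1 ≤ p.2 ∧ p.2 ≤ y.length ∧ q = (p.1, p.2 - 1) ∧
    hh x y p.1 p.2 = hh x y p.1 (p.2 - 1) + 1

/-- Arcs of the digraph `G_{x,y}`. -/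
def IsArc (x y : List α) (p q : ℕ × ℕ) : Prop :=
  IsArc1 x y p q ∨ IsArc2 x y p q ∨ IsArc3 x y p q

/-- `P` is a path in `G_{x,y}` from `v_{n,m}` to `v_{0,0}`. -/
def IsPath (x y : List α) (P : List (ℕ × ℕ)) : Prop :=
  P.Chain' (IsArc x y) ∧ P.head? = some (x.length, y.length) ∧ P.getLast? = some (0, 0)

/-- Number of arcs of a path `P` satisfying the arc predicate `A`. -/
noncomputable def countArc (A : ℕ × ℕ → ℕ × ℕ → Prop) (P : List (ℕ × ℕ)) : ℕ :=
  (P.zip P.tail).countP fun pq => decide (A pq.1 pq.2)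

/-- First indices of the type-1 arcs of `P`. -/
def fD (x y : List α) (P : List (ℕ × ℕ)) : Set ℕ :=
  { i | ∃ pq ∈ P.zip P.tail, IsArc1 x y pq.1 pq.2 ∧ pq.1.1 = i }

/-- Second indices of the type-3 arcs of `P`. -/
def fI (x y : List α) (P : List (ℕ × ℕ)) : Set ℕ :=
  { j | ∃ pq ∈ P.zip P.tail, IsArc3 x y pq.1 pq.2 ∧ pq.1.2 = j }

/-- The single-deletion ball of `x`. -/
def delBall (x : List α) : Set (List α) :=
  { z | ∃ j, 1 ≤ j ∧ j ≤ x.length ∧ z = delF x {j} }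

/-- `L^{(1)}(x)`: sequences (other than `x`) obtained from `x` by a single
insertion followed by a single deletion. -/
def L1 (x : List α) : Set (List α) :=
  { y | y ≠ x ∧ ∃ s, 1 ≤ s ∧ s ≤ x.length + 1 ∧ ∃ a : α, ∃ j, 1 ≤ j ∧ j ≤ x.length + 1 ∧
      y = delF (x.insertIdx (s - 1) a) {j} }

/-- `x ∈ E_{n,q,t}`: any `t` deletion positions are uniquely detectable. -/
def Detects (x : List α) (t : ℕ) : Prop :=
  ∀ S S' : Finset ℕ, S ⊆ Finset.Icc 1 x.length → S' ⊆ Finset.Icc 1 x.length →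
    S.card = t → S'.card = t → delF x S = delF x S' → S = S'

/-- `x` with the adjacent (1-indexed) symbols `x_i` and `x_{i+1}` swapped. -/
def swapAdj (x : List α) (i : ℕ) : List α :=
  x.take (i - 1) ++ ((x.drop (i - 1)).take 2).reverse ++ x.drop (i + 1)

/-- The partial order on paths of `G_{x,y}`. -/
def PathLE (P Q : List (ℕ × ℕ)) : Prop :=
  ∀ j : ℕ, sInf {i | (i, j) ∈ P} ≤ sInf {i | (i, j) ∈ Q} ∧
    sSup {i | (i, j) ∈ P} ≤ sSup {i | (i, j) ∈ Q}

/-- The Wagner–Fischer matrix. -/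
def wfH [DecidableEq α] (x y : List α) : ℕ → ℕ → ℕ
  | i, 0 => i
  | 0, j + 1 => j + 1
  | i + 1, j + 1 =>
      min (wfH x y (i + 1) j + 1)
        (min (wfH x y i (j + 1) + 1)
          (wfH x y i j + if x[i]? = y[j]? then 0 else 2))

/-! Each arc type moves the triple `(i, j, h_{i,j})` by a fixed vector: type 1 by `(1, 0, 1)`,
type 2 by `(1, 1, 0)` and type 3 by `(0, 1, 1)`. Summing along a path from
`(n, m, d(x, y))` to `(0, 0, 0)` gives three linear equations in the three arc counts, whose
solution is the claim. The one non-trivial input is that a type-2 arc leaves `h` unchanged,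
`d(u a, v a) = d(u, v)`; it follows from `d(u, v) = |u| + |v| - 2 |w|` for a longest common
subsequence `w`, which holds because an edit step changes `|u| - 2 |w|` by at most one. -/

open List

def EditPath (n : ℕ) (u v : List α) : Prop :=
  ∃ f : ℕ → List α, f 0 = u ∧ f n = v ∧ ∀ i < n, EditStep (f i) (f (i + 1))

namespace EditStep

variable {u v : List α}

theorem symm (h : EditStep u v) : EditStep v u := Or.symm h

theorem cons (a : α) (h : EditStep u v) : EditStep (a :: u) (a :: v) := by
  rcases h with ⟨i, b, rfl⟩ | ⟨i, b, rfl⟩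
  · exact Or.inl ⟨i + 1, b, insertIdx_succ_cons.symm⟩
  · exact Or.inr ⟨i + 1, b, insertIdx_succ_cons.symm⟩

theorem cons_self (a : α) (u : List α) : EditStep (a :: u) u := Or.inr ⟨0, a, rfl⟩

theorem editPath (h : EditStep u v) : EditPath 1 u v :=
  ⟨fun i => if i = 0 then u else v, rfl, rfl, fun i hi => by
    simpa [Nat.lt_one_iff.mp hi] using h⟩

theorem exists_sublist_of_sublist {w : List α} (h : EditStep u v) (hw : w <+ v) :
    ∃ w', w' <+ u ∧ w' <+ w ∧ u.length + 2 * w.length ≤ v.length + 2 * w'.length + 1 := by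
  rcases h with ⟨i, a, rfl⟩ | ⟨i, a, rfl⟩
  · rcases le_or_gt i u.length with hi | hi
    · obtain ⟨u₁, u₂, rfl, -, hins⟩ := exists_of_modifyTailIdx (List.cons a) hi
      rw [insertIdx, hins] at hw ⊢
      obtain ⟨w₁, w₂, rfl, hw₁, hw₂⟩ := sublist_append_iff.mp hw
      refine ⟨w₁ ++ w₂.tail, hw₁.append hw₂.tail, (tail_sublist w₂).append_left w₁, ?_⟩
      simp only [length_append, length_tail, length_cons]
      omega
    · rw [insertIdx_of_length_lt hi] at hw ⊢
      exact ⟨w, hw, Sublist.refl w, by have := hw.length_le; omega⟩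
  · exact ⟨w, hw.trans (sublist_insertIdx _ _ _), Sublist.refl w,
      by have := hw.length_le; have := length_insertIdx_le_succ (l := v) (i := i) (x := a); omega⟩

end EditStep

namespace EditPath

theorem refl (u : List α) : EditPath 0 u u :=
  ⟨fun _ => u, rfl, rfl, fun _ h => absurd h (Nat.not_lt_zero _)⟩

variable {m n : ℕ} {u v w : List α}

theorem symm (h : EditPath n u v) : EditPath n v u := by
  obtain ⟨f, h0, hn, hs⟩ := h
  refine ⟨fun i => f (n - i), by simp [hn], by simp [h0], fun i hi => ?_⟩
  have := (hs (n - (i + 1)) (by omega)).symm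
  rwa [show n - (i + 1) + 1 = n - i by omega] at this

theorem trans (h₁ : EditPath m u w) (h₂ : EditPath n w v) : EditPath (m + n) u v := by
  obtain ⟨f, f0, fm, fs⟩ := h₁
  obtain ⟨g, g0, gn, gs⟩ := h₂
  refine ⟨fun i => if i ≤ m then f i else g (i - m), by simp [f0], ?_, fun i hi => ?_⟩
  · rcases Nat.eq_zero_or_pos n with rfl | hn
    · simp [fm, ← g0, gn]
    · simp [show ¬ m + n ≤ m by omega, gn]
  · by_cases h : i + 1 ≤ m
    · simpa [show i ≤ m by omega, h] using fs i (by omega)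
    · have := gs (i - m) (by omega)
      rcases Nat.eq_or_lt_of_le (show m ≤ i by omega) with rfl | hmi
      · simpa [fm, ← g0] using this
      · simpa [show ¬ i ≤ m by omega, show ¬ i + 1 ≤ m by omega,
          show i + 1 - m = i - m + 1 by omega] using this

theorem cons (a : α) (h : EditPath n u v) : EditPath n (a :: u) (a :: v) := by
  obtain ⟨f, f0, fn, fs⟩ := h
  exact ⟨fun i => a :: f i, by simp [f0], by simp [fn], fun i hi => (fs i hi).cons a⟩

theorem of_sublist (h : w <+ u) : EditPath (u.length - w.length) u w := by
  induction h with
  | slnil => exact refl []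
  | @cons w u a h ih =>
    have := (EditStep.cons_self a u).editPath.trans ih
    rwa [length_cons, show u.length + 1 - w.length = 1 + (u.length - w.length) by
      have := h.length_le; omega]
  | @cons_cons w u a _ ih => simpa using ih.cons a

theorem exists_common_sublist (h : EditPath n u v) :
    ∃ w, w <+ u ∧ w <+ v ∧ u.length + v.length ≤ n + 2 * w.length := by
  induction n generalizing u with
  | zero =>
    obtain ⟨f, rfl, hf, -⟩ := h
    exact ⟨f 0, Sublist.refl _, hf ▸ Sublist.refl _, by rw [hf]; omega⟩
  | succ n ih =>
    obtain ⟨f, rfl, fn, fs⟩ := h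
    have hrest : EditPath n (f 1) v :=
      ⟨fun i => f (i + 1), rfl, fn, fun i _ => fs (i + 1) (by omega)⟩
    obtain ⟨w, hw₁, hwv, hlen⟩ := ih hrest
    have hstep : EditStep (f 0) (f 1) := fs 0 (by omega)
    obtain ⟨w', hw', hw'w, hlen'⟩ := hstep.exists_sublist_of_sublist hw₁
    exact ⟨w', hw', hw'w.trans hwv, by omega⟩

end EditPath

section Indel

variable {u v w : List α}

theorem dropLast_sublist_of_sublist_append_singleton {a : α} (h : w <+ u ++ [a]) :
    w.dropLast <+ u := by
  simpa using (reverse_sublist.mpr h).tail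

theorem indel_le {n : ℕ} (h : EditPath n u v) : indel u v ≤ n := Nat.sInf_le h

theorem editPath_indel (u v : List α) : EditPath (indel u v) u v :=
  Nat.sInf_mem (s := {n | EditPath n u v}) ⟨_, (EditPath.of_sublist (nil_sublist u)).trans
    (EditPath.of_sublist (nil_sublist v)).symm⟩

theorem indel_add_two_mul_le_of_sublist (hu : w <+ u) (hv : w <+ v) :
    indel u v + 2 * w.length ≤ u.length + v.length := by
  have := indel_le ((EditPath.of_sublist hu).trans (EditPath.of_sublist hv).symm)
  have := hu.length_le
  have := hv.length_le
  omega

theorem exists_common_sublist_indel (u v : List α) :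
    ∃ w, w <+ u ∧ w <+ v ∧ u.length + v.length ≤ indel u v + 2 * w.length :=
  (editPath_indel u v).exists_common_sublist

theorem indel_append_singleton (u v : List α) (a : α) :
    indel (u ++ [a]) (v ++ [a]) = indel u v := by
  apply le_antisymm
  · obtain ⟨w, hu, hv, hlen⟩ := exists_common_sublist_indel u v
    have := indel_add_two_mul_le_of_sublist (hu.append_right [a]) (hv.append_right [a])
    simp only [length_append, length_singleton] at this
    omega
  · obtain ⟨w, hu, hv, hlen⟩ := exists_common_sublist_indel (u ++ [a]) (v ++ [a])
    have := indel_add_two_mul_le_of_sublist (dropLast_sublist_of_sublist_append_singleton hu)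
      (dropLast_sublist_of_sublist_append_singleton hv)
    simp only [length_append, length_singleton, length_dropLast] at this hlen
    omega

theorem indel_append_right (u v w : List α) : indel (u ++ w) (v ++ w) = indel u v := by
  induction w generalizing u v with
  | nil => simp
  | cons a w ih => rw [← singleton_append, ← append_assoc, ← append_assoc, ih,
      indel_append_singleton]

end Indel

section Arcs

variable {x y : List α} {p q : ℕ × ℕ}

theorem hh_add_one_add_one {i j : ℕ} (h : x[i]? = y[j]?) :
    hh x y (i + 1) (j + 1) = hh x y i j := by
  rw [hh, take_add_one, take_add_one, h, indel_append_right, hh]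

theorem IsArc.fst_eq (h : IsArc x y p q) :
    p.1 = q.1 + (if IsArc1 x y p q then 1 else 0) + (if IsArc2 x y p q then 1 else 0) := by
  rcases h with h | h | h <;> split_ifs <;>
    simp only [IsArc1, IsArc2, IsArc3, Prod.ext_iff] at * <;> omega

theorem IsArc.snd_eq (h : IsArc x y p q) :
    p.2 = q.2 + (if IsArc2 x y p q then 1 else 0) + (if IsArc3 x y p q then 1 else 0) := by
  rcases h with h | h | h <;> split_ifs <;>
    simp only [IsArc1, IsArc2, IsArc3, Prod.ext_iff] at * <;> omega

theorem IsArc2.hh_eq (h : IsArc2 x y p q) : hh x y p.1 p.2 = hh x y q.1 q.2 := by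
  obtain ⟨h1, -, h2, -, rfl, hx⟩ := h
  have := hh_add_one_add_one (x := x) (y := y) hx
  rwa [Nat.sub_add_cancel h1, Nat.sub_add_cancel h2] at this

theorem IsArc.hh_eq (h : IsArc x y p q) :
    hh x y p.1 p.2 = hh x y q.1 q.2 + (if IsArc1 x y p q then 1 else 0) +
      (if IsArc3 x y p q then 1 else 0) := by
  rcases h with h | h | h
  · obtain rfl := h.2.2.2.1
    split_ifs <;> simp only [IsArc1, IsArc3, Prod.ext_iff] at * <;> omega
  · have := h.hh_eq
    split_ifs <;> simp only [IsArc1, IsArc2, IsArc3, Prod.ext_iff] at * <;> omega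
  · obtain rfl := h.2.2.2.1
    split_ifs <;> simp only [IsArc1, IsArc3, Prod.ext_iff] at * <;> omega

end Arcs

theorem countArc_cons_cons (A : ℕ × ℕ → ℕ × ℕ → Prop) (p p' : ℕ × ℕ) (P : List (ℕ × ℕ)) :
    countArc A (p :: p' :: P) = countArc A (p' :: P) + if A p p' then 1 else 0 := by
  simp [countArc, countP_cons]

theorem eq_add_countArc_of_isChain {R A B : ℕ × ℕ → ℕ × ℕ → Prop} (φ : ℕ × ℕ → ℕ)
    (hφ : ∀ p q, R p q → φ p = φ q + (if A p q then 1 else 0) + (if B p q then 1 else 0)) :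
    ∀ {P : List (ℕ × ℕ)} {p q : ℕ × ℕ}, P.IsChain R → P.head? = some p → P.getLast? = some q →
      φ p = φ q + countArc A P + countArc B P
  | [_], p, q, _, rfl, hq => by cases hq; simp [countArc]
  | p :: p' :: P, _, q, hc, rfl, hq => by
    rw [isChain_cons_cons] at hc
    have := eq_add_countArc_of_isChain φ hφ hc.2 rfl hq
    rw [hφ p p' hc.1, this, countArc_cons_cons, countArc_cons_cons]
    ring

theorem hh_length_length (x y : List α) : hh x y x.length y.length = indel x y := by
  simp [hh]

theorem hh_zero_zero (x y : List α) : hh x y 0 0 = 0 :=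
  Nat.le_zero.mp (indel_le (EditPath.refl []))

/-- the exact numbers of type-1, type-2 and type-3 arcs of any path. -/
theorem count_each_type {α : Type*} (x y : List α) (P : List (ℕ × ℕ))
    (hP : IsPath x y P) :
    (2 * countArc (IsArc1 x y) P : ℤ) = indel x y + x.length - y.length ∧
    (2 * countArc (IsArc2 x y) P : ℤ) = -(indel x y : ℤ) + x.length + y.length ∧
    (2 * countArc (IsArc3 x y) P : ℤ) = (indel x y : ℤ) - x.length + y.length := by
  obtain ⟨hc, hhead, hlast⟩ := hP
  have hn := eq_add_countArc_of_isChain Prod.fst (fun _ _ h => h.fst_eq) hc hhead hlast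
  have hm := eq_add_countArc_of_isChain Prod.snd (fun _ _ h => h.snd_eq) hc hhead hlast
  have hd := eq_add_countArc_of_isChain (fun p => hh x y p.1 p.2) (fun _ _ h => h.hh_eq)
    hc hhead hlast
  simp only [hh_length_length, hh_zero_zero] at hn hm hd
  omega
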